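/- arXiv:2603.27943 — 3 statements merged into one kernel-verified Lean document; each statement's English description precedes it below -/
import Mathlib

section
/- Let A be the 3×3 matrix with rows (0, ω_r, cω_r), (−ω_r, 0, v_r), (0, 0, 0), and B the 3×2 matrix with rows (−1, 0), (0, c), (0, −1). If v_r ≠ 0 and c ≠ −1, then the pair (A, B) is controllable, i.e., the controllability matrix [B, AB, A²B] has rank 3. -/
open Matrix

/-! A `3 × 3` minor of `[B, AB, A²B]` is already invertible: the columns `B e₀`, `B e₁` and
`A B e₁ = (0, -v_r, 0)` have determinant `v_r`. -/

theorem Matrix.rank_eq_card_height_of_isUnit_det_submatrix {m n R : Type*} [Fintype m] [Fintype n]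
    [DecidableEq m] [CommRing R] [StrongRankCondition R] (M : Matrix m n R) (cols : m → n)
    (h : IsUnit (M.submatrix id cols).det) : M.rank = Fintype.card m :=
  le_antisymm M.rank_le_card_height <| by
    calc Fintype.card m = (M.submatrix id cols).rank :=
          (rank_of_isUnit _ ((isUnit_iff_isUnit_det _).mpr h)).symm
      _ ≤ M.rank := rank_submatrix_le M id cols

theorem vessel_controllable_general (ωr vr c : ℝ) (hv : vr ≠ 0) :
    let A : Matrix (Fin 3) (Fin 3) ℝ := !![0, ωr, c * ωr; -ωr, 0, vr; 0, 0, 0]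
    let B : Matrix (Fin 3) (Fin 2) ℝ := !![-1, 0; 0, c; 0, -1]
    (fromCols (fromCols B (A * B)) (A * A * B)).rank = 3 := by
  intro A B
  let cols : Fin 3 → (Fin 2 ⊕ Fin 2) ⊕ Fin 2 := ![.inl (.inl 0), .inl (.inl 1), .inl (.inr 1)]
  have hdet : ((fromCols (fromCols B (A * B)) (A * A * B)).submatrix id cols).det = vr := by
    simp [det_fin_three, cols, A, B]
  simpa using rank_eq_card_height_of_isUnit_det_submatrix _ cols (hdet ▸ hv.isUnit)

/-- For the linearized vessel model, if `v_r ≠ 0` and `c ≠ −1`, the pair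
`(A, B)` is controllable: the controllability matrix `[B, AB, A²B]` has rank 3. -/
theorem vessel_controllable (ωr vr c : ℝ) (hv : vr ≠ 0) (hc : c ≠ -1) :
    let A : Matrix (Fin 3) (Fin 3) ℝ := !![0, ωr, c * ωr; -ωr, 0, vr; 0, 0, 0]
    let B : Matrix (Fin 3) (Fin 2) ℝ := !![-1, 0; 0, c; 0, -1]
    (fromCols (fromCols B (A * B)) (A * A * B)).rank = 3 :=
  vessel_controllable_general ωr vr c hv
end

section
/- Let h be C², b > 0, and suppose φ, u_o satisfy the stochastic ZCBF inequality L_f h + L_g h·(u_o + φ) + L^I_σ(h) ≥ b H_σ(h) at a point x. Then B_b(x) = e^{−bh(x)} satisfies L_f B_b + L_g B_b·(u_o + φ) + L^I_σ(B_b) ≤ 0 at x. -/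
open Real Matrix

/-- Gradient of a scalar field on `ℝⁿ` as a vector of partial derivatives. -/
noncomputable def gradVec {n : ℕ} (y : (Fin n → ℝ) → ℝ) (x : Fin n → ℝ) : Fin n → ℝ :=
  fun i => fderiv ℝ y x (Pi.single i 1)

/-- Hessian of a scalar field on `ℝⁿ`. -/
noncomputable def hessMat {n : ℕ} (y : (Fin n → ℝ) → ℝ) (x : Fin n → ℝ) :
    Matrix (Fin n) (Fin n) ℝ :=
  Matrix.of fun i j => fderiv ℝ (fun z => fderiv ℝ y z (Pi.single j 1)) x (Pi.single i 1)

/-- Itô correction term `L^I_σ(y)(x) = ½ tr[σ(x)σ(x)ᵀ Hess y(x)]`. -/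
noncomputable def LIσ {n d : ℕ} (σ : (Fin n → ℝ) → Matrix (Fin n) (Fin d) ℝ)
    (y : (Fin n → ℝ) → ℝ) (x : Fin n → ℝ) : ℝ :=
  (1 / 2) * (σ x * (σ x)ᵀ * hessMat y x).trace

/-- Quadratic variation term `H_σ(h)(x) = ½ (∇h σ)(∇h σ)ᵀ`. -/
noncomputable def Hσ {n d : ℕ} (σ : (Fin n → ℝ) → Matrix (Fin n) (Fin d) ℝ)
    (h : (Fin n → ℝ) → ℝ) (x : Fin n → ℝ) : ℝ :=
  (1 / 2) * ((gradVec h x) ᵥ* (σ x)) ⬝ᵥ ((gradVec h x) ᵥ* (σ x))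

/-!
Write `B_b = ψ ∘ h` with `ψ t = e^{-bt}`. The chain rule gives `∇B_b = ψ'(h) ∇h` and
`Hess B_b = ψ''(h) ∇h ∇hᵀ + ψ'(h) Hess h`, and tracing the latter against `½ σσᵀ` gives
`L^I_σ(B_b) = ψ''(h) H_σ(h) + ψ'(h) L^I_σ(h)`. Since `ψ' = -bψ` and `ψ'' = b²ψ`, the generator of
`B_b` along the closed-loop drift is `-b e^{-bh}` times the ZCBF margin
`L_f h + L_g h·(u_o + φ) + L^I_σ(h) - b H_σ(h) ≥ 0`.
-/

namespace Matrix

variable {ι κ R : Type*} [Fintype ι] [Fintype κ] [CommRing R]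

theorem trace_mul_transpose_mul_vecMulVec (A : Matrix ι κ R) (v : ι → R) :
    (A * Aᵀ * vecMulVec v v).trace = (v ᵥ* A) ⬝ᵥ (v ᵥ* A) := by
  rw [mul_vecMulVec, trace_vecMulVec, dotProduct_comm, ← mulVec_mulVec, dotProduct_mulVec,
    mulVec_transpose]

end Matrix

section Composition

variable {n : ℕ} {ψ : ℝ → ℝ} {h : (Fin n → ℝ) → ℝ}

theorem fderiv_comp_eq_deriv_smul {z : Fin n → ℝ} (hψ : DifferentiableAt ℝ ψ (h z))
    (hh : DifferentiableAt ℝ h z) : fderiv ℝ (ψ ∘ h) z = deriv ψ (h z) • fderiv ℝ h z :=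
  (hψ.hasDerivAt.comp_hasFDerivAt z hh.hasFDerivAt).fderiv

theorem hessMat_comp (hψ : ContDiff ℝ 2 ψ) (hh : ContDiff ℝ 2 h) (x : Fin n → ℝ) :
    hessMat (ψ ∘ h) x = deriv (deriv ψ) (h x) • vecMulVec (gradVec h x) (gradVec h x)
      + deriv ψ (h x) • hessMat h x := by
  have hh₁ : Differentiable ℝ h := hh.differentiable two_ne_zero
  have hpartial (j : Fin n) : Differentiable ℝ fun z => fderiv ℝ h z (Pi.single j 1) :=
    ((hh.fderiv_right (m := 1) le_rfl).differentiable one_ne_zero).clm_apply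
      (differentiable_const _)
  ext i j
  have hchain : HasFDerivAt (fun z => deriv ψ (h z) * fderiv ℝ h z (Pi.single j 1))
      (deriv ψ (h x) • fderiv ℝ (fun z => fderiv ℝ h z (Pi.single j 1)) x
        + fderiv ℝ h x (Pi.single j 1) • deriv (deriv ψ) (h x) • fderiv ℝ h x) x :=
    ((hψ.differentiable_deriv_two _).hasDerivAt.comp_hasFDerivAt x (hh₁ x).hasFDerivAt).mul
      (hpartial j x).hasFDerivAt
  have hfun : (fun z => fderiv ℝ (ψ ∘ h) z (Pi.single j 1))
      = fun z => deriv ψ (h z) * fderiv ℝ h z (Pi.single j 1) := by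
    ext z
    rw [fderiv_comp_eq_deriv_smul (hψ.differentiable two_ne_zero _) (hh₁ z)]
    rfl
  change fderiv ℝ (fun z => fderiv ℝ (ψ ∘ h) z (Pi.single j 1)) x (Pi.single i 1) = _
  rw [hfun, hchain.fderiv]
  simp only [hessMat, gradVec, of_apply, Matrix.add_apply, Matrix.smul_apply, vecMulVec_apply,
    _root_.add_apply, _root_.smul_apply, smul_eq_mul]
  ring

theorem LIσ_comp {d : ℕ} (hψ : ContDiff ℝ 2 ψ) (hh : ContDiff ℝ 2 h)
    (σ : (Fin n → ℝ) → Matrix (Fin n) (Fin d) ℝ) (x : Fin n → ℝ) :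
    LIσ σ (ψ ∘ h) x = deriv (deriv ψ) (h x) * Hσ σ h x + deriv ψ (h x) * LIσ σ h x := by
  rw [LIσ, hessMat_comp hψ hh, Matrix.mul_add, trace_add, Matrix.mul_smul,
    Matrix.mul_smul, trace_smul, trace_smul, trace_mul_transpose_mul_vecMulVec, Hσ, LIσ,
    smul_eq_mul, smul_eq_mul]
  ring

end Composition

/-- If the stochastic ZCBF inequality
`L_f h + L_g h·(u_o + φ) + L^I_σ(h) ≥ b H_σ(h)` holds at `x`, then
`B_b = e^{−bh}` satisfies `L_f B_b + L_g B_b·(u_o + φ) + L^I_σ(B_b) ≤ 0` at `x`. -/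
theorem zcbf_to_supermartingale_generator {n m d : ℕ}
    (h : (Fin n → ℝ) → ℝ) (hh : ContDiff ℝ 2 h) (b : ℝ) (hb : 0 < b)
    (f : (Fin n → ℝ) → (Fin n → ℝ))
    (g : (Fin n → ℝ) → Matrix (Fin n) (Fin m) ℝ)
    (σ : (Fin n → ℝ) → Matrix (Fin n) (Fin d) ℝ)
    (uo φ : (Fin n → ℝ) → (Fin m → ℝ)) (x : Fin n → ℝ)
    (hzcbf : (fderiv ℝ h x) (f x + (g x) *ᵥ (uo x + φ x)) + LIσ σ h x ≥ b * Hσ σ h x) :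
    (fderiv ℝ (fun z => exp (-b * h z)) x) (f x + (g x) *ᵥ (uo x + φ x))
      + LIσ σ (fun z => exp (-b * h z)) x ≤ 0 := by
  set ψ : ℝ → ℝ := fun t => exp (-b * t)
  have hψ : ContDiff ℝ 2 ψ := by fun_prop
  have hψ' : deriv ψ = fun t => -b * exp (-b * t) := by
    simpa only [iteratedDeriv_one, pow_one] using iteratedDeriv_exp_const_mul 1 (-b)
  have hψ'' : deriv (deriv ψ) = fun t => (-b) ^ 2 * exp (-b * t) := by
    simpa only [iteratedDeriv_succ, iteratedDeriv_zero] using iteratedDeriv_exp_const_mul 2 (-b)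
  change fderiv ℝ (ψ ∘ h) x _ + LIσ σ (ψ ∘ h) x ≤ 0
  rw [fderiv_comp_eq_deriv_smul (hψ.differentiable two_ne_zero _)
      (hh.differentiable two_ne_zero x), LIσ_comp hψ hh, hψ'', hψ', _root_.smul_apply, smul_eq_mul]
  have hmargin : 0 ≤ b * exp (-b * h x) *
      ((fderiv ℝ h x) (f x + (g x) *ᵥ (uo x + φ x)) + LIσ σ h x - b * Hσ σ h x) :=
    mul_nonneg (by positivity) (by linarith)
  linarith
end

section
/- Let P, Q be symmetric positive definite n×n matrices, A ∈ ℝ^{n×n}, B ∈ ℝ^{n×m}, G ∈ ℝ^{n×d}, K with PĀ + ĀᵀP = −Q for Ā = A − BK. Suppose for some b > 0 that xᵀQx − tr[GᵀPG] ≥ 2b xᵀPGGᵀPx for all x in a set S. If there exist a symmetric positive definite R ∈ ℝ^{m×m} and b⁺ > 0 with BR⁻¹Bᵀ = b⁺GGᵀ, then for φ(x) = −R⁻¹BᵀPx and all x ∈ S: xᵀQx + 2xᵀPBR⁻¹BᵀPx − tr[GᵀPG] ≥ 2(b + b⁺)xᵀPGGᵀPx. -/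
open Matrix

/-- adding the pseudo-optimal feedback `φ(x) = −R⁻¹BᵀPx` increases the
barrier certificate constant from `b` to `b + b⁺` when `BR⁻¹Bᵀ = b⁺GGᵀ`. -/
theorem linear_compensator_improves_certificate {n m d : ℕ}
    (A : Matrix (Fin n) (Fin n) ℝ) (B : Matrix (Fin n) (Fin m) ℝ)
    (G : Matrix (Fin n) (Fin d) ℝ) (K : Matrix (Fin m) (Fin n) ℝ)
    (P Q : Matrix (Fin n) (Fin n) ℝ)
    (hP : P.PosDef) (hQ : Q.PosDef)
    (hLyap : P * (A - B * K) + (A - B * K)ᵀ * P = -Q)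
    (S : Set (Fin n → ℝ)) (b : ℝ) (hb : 0 < b)
    (hcert : ∀ x ∈ S,
      x ⬝ᵥ Q.mulVec x - (Gᵀ * P * G).trace ≥ 2 * b * (x ⬝ᵥ (P * G * Gᵀ * P).mulVec x))
    (R : Matrix (Fin m) (Fin m) ℝ) (hR : R.PosDef)
    (bp : ℝ) (hbp : 0 < bp)
    (hmatch : B * R⁻¹ * Bᵀ = bp • (G * Gᵀ)) :
    ∀ x ∈ S,
      x ⬝ᵥ Q.mulVec x + 2 * (x ⬝ᵥ (P * B * R⁻¹ * Bᵀ * P).mulVec x) - (Gᵀ * P * G).trace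
        ≥ 2 * (b + bp) * (x ⬝ᵥ (P * G * Gᵀ * P).mulVec x) := by
  intro x hx
  have h := hcert x hx
  have hkey : P * B * R⁻¹ * Bᵀ * P = bp • (P * G * Gᵀ * P) := by
    have h1 : P * B * R⁻¹ * Bᵀ * P = P * (B * R⁻¹ * Bᵀ) * P := by
      simp only [Matrix.mul_assoc]
    rw [h1, hmatch, Matrix.mul_smul, Matrix.smul_mul]
    simp only [Matrix.mul_assoc]
  have h2 : x ⬝ᵥ (P * B * R⁻¹ * Bᵀ * P).mulVec x
      = bp * (x ⬝ᵥ (P * G * Gᵀ * P).mulVec x) := by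
    rw [hkey, Matrix.smul_mulVec, dotProduct_smul, smul_eq_mul]
  rw [h2]; nlinarith [h]
end
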